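/- There exists an absolute constant c > 0 such that for every γ ∈ (0,1], every integer n ≥ 18 (so that a_n e^{a_n} ≤ 1/2), every integer k ≥ 0, every y ∈ ℙ(V*) and every φ ∈ B_γ: the product φ·χ_{n,k}^y belongs to B_γ and ‖φ·χ_{n,k}^y‖_γ ≤ c·‖φ‖_∞·e^{γ k a_n}/a_n^γ + ‖φ‖_γ. -/

import Mathlib

open MeasureTheory Real Filter
open scoped InnerProductSpace ENNReal Topology

noncomputable section

abbrev V (d : ℕ) := EuclideanSpace ℝ (Fin d)
abbrev PV (d : ℕ) := Projectivization ℝ (V d)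

/-- `δ(x,y) = |⟨f,v⟩| / (‖f‖‖v‖)` for `x = ℝv ∈ ℙ(V)` and `y = ℝf ∈ ℙ(V*)`, where the
dual space `V*` is identified with `V = ℝ^d` via the Euclidean inner product. -/
def delta (d : ℕ) (x y : PV d) : ℝ := |⟪y.rep, x.rep⟫_ℝ| / (‖y.rep‖ * ‖x.rep‖)

/-- The angular distance `d(x,x') = ‖v ∧ v'‖/(‖v‖‖v'‖)
  = sqrt(‖v‖²‖v'‖² − ⟨v,v'⟩²)/(‖v‖‖v'‖)` on the projective space. -/
def angDist (d : ℕ) (x x' : PV d) : ℝ :=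
  Real.sqrt (‖x.rep‖ ^ 2 * ‖x'.rep‖ ^ 2 - ⟪x.rep, x'.rep⟫_ℝ ^ 2) / (‖x.rep‖ * ‖x'.rep‖)

/-- The uniform distribution function `U(t) = min(max(t,0),1)` on `[0,1]`. -/
def Ufun (t : ℝ) : ℝ := min (max t 0) 1

/-- `a_n = 1 / log n`. -/
def an (n : ℕ) : ℝ := 1 / Real.log n

/-- `U_{n,k}(t) = U((t − (k−1)a_n)/a_n)`. -/
def Unk (n k : ℕ) (t : ℝ) : ℝ := Ufun ((t - ((k : ℝ) - 1) * an n) / an n)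

/-- `h_{n,k} = U_{n,k} − U_{n,k+1}`. -/
def hnk (n k : ℕ) (t : ℝ) : ℝ := Unk n k t - Unk n (k + 1) t

open Classical in
/-- `χ_{n,k}^y(x) = h_{n,k}(−log δ(x,y))`, with the convention `log 0 = −∞`
(so that `χ_{n,k}^y(x) = 0` when `δ(x,y) = 0`). -/
def chi (d n k : ℕ) (y x : PV d) : ℝ :=
  if delta d x y = 0 then 0 else hnk n k (-Real.log (delta d x y))

/-- Sup norm `‖φ‖_∞` of a function on the projective space. -/
def supNorm (d : ℕ) (φ : PV d → ℝ) : ℝ := ⨆ x, |φ x|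

open Classical in
/-- The ratio appearing in the γ-Hölder seminorm. -/
def holderRatio (d : ℕ) (γ : ℝ) (φ : PV d → ℝ) (p : PV d × PV d) : ℝ :=
  if p.1 = p.2 then 0 else |φ p.1 - φ p.2| / angDist d p.1 p.2 ^ γ

/-- γ-Hölder seminorm `[φ]_γ`. -/
def holderSemi (d : ℕ) (γ : ℝ) (φ : PV d → ℝ) : ℝ := ⨆ p, holderRatio d γ φ p

/-- The norm `‖φ‖_γ = ‖φ‖_∞ + [φ]_γ` of the Banach space `B_γ`. -/
def holderNorm (d : ℕ) (γ : ℝ) (φ : PV d → ℝ) : ℝ := supNorm d φ + holderSemi d γ φ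

/-- Membership in `B_γ` (finiteness of `‖φ‖_γ`). -/
def MemBgamma (d : ℕ) (γ : ℝ) (φ : PV d → ℝ) : Prop :=
  BddAbove (Set.range fun x => |φ x|) ∧ BddAbove (Set.range (holderRatio d γ φ))

section Aux

lemma Ufun_nonneg (t : ℝ) : 0 ≤ Ufun t :=
  le_min (le_max_right t 0) zero_le_one

lemma Ufun_le_one (t : ℝ) : Ufun t ≤ 1 := min_le_right _ _

lemma Ufun_mono : Monotone Ufun := fun a b h =>
  min_le_min (max_le_max h le_rfl) le_rfl

lemma Ufun_eq_one {t : ℝ} (ht : 1 ≤ t) : Ufun t = 1 := by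
  unfold Ufun
  rw [max_eq_left (le_trans zero_le_one ht), min_eq_right ht]

lemma Ufun_lip (t s : ℝ) : |Ufun t - Ufun s| ≤ |t - s| := by
  calc |Ufun t - Ufun s| ≤ max |max t 0 - max s 0| |(1:ℝ) - 1| :=
        abs_min_sub_min_le_max _ _ _ _
    _ = |max t 0 - max s 0| := by simp
    _ ≤ |t - s| := abs_max_sub_max_le_abs _ _ _

lemma Unk_lip (n k : ℕ) (ha : 0 < an n) (t s : ℝ) :
    |Unk n k t - Unk n k s| ≤ |t - s| / an n := by
  have h := Ufun_lip ((t - ((k : ℝ) - 1) * an n) / an n) ((s - ((k : ℝ) - 1) * an n) / an n)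
  unfold Unk
  refine h.trans (le_of_eq ?_)
  rw [div_sub_div_same, abs_div, abs_of_pos ha]
  congr 2
  ring

lemma hnk_nonneg (n k : ℕ) (ha : 0 < an n) (t : ℝ) : 0 ≤ hnk n k t := by
  unfold hnk Unk
  rw [sub_nonneg]
  apply Ufun_mono
  rw [div_le_div_iff_of_pos_right ha]
  push_cast
  nlinarith [ha]

lemma hnk_le_one (n k : ℕ) (t : ℝ) : hnk n k t ≤ 1 := by
  unfold hnk Unk
  have h1 := Ufun_le_one ((t - ((k : ℝ) - 1) * an n) / an n)
  have h2 := Ufun_nonneg ((t - (((k + 1 : ℕ) : ℝ) - 1) * an n) / an n)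
  linarith

lemma hnk_lip (n k : ℕ) (ha : 0 < an n) (t s : ℝ) :
    |hnk n k t - hnk n k s| ≤ 2 * |t - s| / an n := by
  unfold hnk
  have h1 := Unk_lip n k ha t s
  have h2 := Unk_lip n (k + 1) ha t s
  calc |Unk n k t - Unk n (k+1) t - (Unk n k s - Unk n (k+1) s)|
      ≤ |Unk n k t - Unk n k s| + |Unk n (k+1) t - Unk n (k+1) s| := by
        rw [show Unk n k t - Unk n (k+1) t - (Unk n k s - Unk n (k+1) s)
            = (Unk n k t - Unk n k s) - (Unk n (k+1) t - Unk n (k+1) s) by ring]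
        exact abs_sub _ _
    _ ≤ |t - s| / an n + |t - s| / an n := add_le_add h1 h2
    _ = 2 * |t - s| / an n := by ring

lemma hnk_eq_zero_of_ge (n k : ℕ) (ha : 0 < an n) {t : ℝ}
    (ht : ((k : ℝ) + 1) * an n ≤ t) : hnk n k t = 0 := by
  unfold hnk Unk
  rw [Ufun_eq_one, Ufun_eq_one, sub_self]
  · rw [le_div_iff₀ ha]
    push_cast
    nlinarith
  · rw [le_div_iff₀ ha]
    push_cast
    nlinarith

end Aux
lemma log_lip_aux {m p q : ℝ} (hm : 0 < m) (hp : m ≤ p) (hq : m ≤ q) :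
    Real.log p - Real.log q ≤ |p - q| / m := by
  have hp0 : 0 < p := lt_of_lt_of_le hm hp
  have hq0 : 0 < q := lt_of_lt_of_le hm hq
  rw [← Real.log_div hp0.ne' hq0.ne']
  calc Real.log (p / q) ≤ p / q - 1 := Real.log_le_sub_one_of_pos (by positivity)
    _ = (p - q) / q := by field_simp
    _ ≤ |p - q| / m := by
        rcases le_or_gt q p with h | h
        · apply div_le_div₀ (abs_nonneg _) (le_abs_self _) hm hq
        · exact le_trans (le_of_lt (div_neg_of_neg_of_pos (by linarith) hq0))
            (by positivity)

lemma log_lip {m p q : ℝ} (hm : 0 < m) (hp : m ≤ p) (hq : m ≤ q) :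
    |Real.log p - Real.log q| ≤ |p - q| / m := by
  rw [abs_sub_le_iff]
  refine ⟨log_lip_aux hm hp hq, ?_⟩
  rw [abs_sub_comm]
  exact log_lip_aux hm hq hp

lemma delta_nonneg (d : ℕ) (x y : PV d) : 0 ≤ delta d x y :=
  div_nonneg (abs_nonneg _) (by positivity)

lemma chi_eq (d n k : ℕ) (ha : 0 < an n) (y x : PV d) :
    chi d n k y x
      = hnk n k (-Real.log (max (delta d x y) (Real.exp (-(((k:ℝ) + 1) * an n))))) := by
  set m := Real.exp (-(((k:ℝ) + 1) * an n)) with hm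
  have hm0 : 0 < m := Real.exp_pos _
  have hlogm : -Real.log m = ((k:ℝ) + 1) * an n := by
    rw [hm, Real.log_exp, neg_neg]
  unfold chi
  split_ifs with h
  · rw [h, max_eq_right hm0.le, hlogm,
      hnk_eq_zero_of_ge n k ha le_rfl]
  · rcases le_or_gt (delta d x y) m with hle | hlt
    · have hd0 : 0 < delta d x y := lt_of_le_of_ne (delta_nonneg d x y) (Ne.symm h)
      rw [max_eq_right hle, hlogm, hnk_eq_zero_of_ge n k ha le_rfl,
        hnk_eq_zero_of_ge n k ha ?_]
      rw [← hlogm]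
      have := Real.log_le_log hd0 hle
      linarith
    · rw [max_eq_left hlt.le]

lemma chi_lip (d n k : ℕ) (ha : 0 < an n) (y x x' : PV d) :
    |chi d n k y x - chi d n k y x'|
      ≤ 2 / (an n * Real.exp (-(((k:ℝ) + 1) * an n)))
          * |delta d x y - delta d x' y| := by
  set m := Real.exp (-(((k:ℝ) + 1) * an n)) with hm
  have hm0 : 0 < m := Real.exp_pos _
  rw [chi_eq d n k ha y x, chi_eq d n k ha y x']
  set u := max (delta d x y) m
  set u' := max (delta d x' y) m
  have hu : m ≤ u := le_max_right _ _
  have hu' : m ≤ u' := le_max_right _ _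
  calc |hnk n k (-Real.log u) - hnk n k (-Real.log u')|
      ≤ 2 * |(-Real.log u) - (-Real.log u')| / an n := hnk_lip n k ha _ _
    _ = 2 * |Real.log u - Real.log u'| / an n := by rw [← abs_neg]; ring_nf
    _ ≤ 2 * (|u - u'| / m) / an n := by
        have h := log_lip hm0 hu hu'
        gcongr
    _ ≤ 2 * (|delta d x y - delta d x' y| / m) / an n := by
        have h1 : |u - u'| ≤ |delta d x y - delta d x' y| :=
          abs_max_sub_max_le_abs _ _ _
        gcongr
    _ = 2 / (an n * m) * |delta d x y - delta d x' y| := by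
        rw [mul_div_assoc', div_div, div_mul_eq_mul_div, mul_comm m (an n)]
lemma angDist_nonneg (d : ℕ) (x x' : PV d) : 0 ≤ angDist d x x' :=
  div_nonneg (Real.sqrt_nonneg _) (by positivity)

lemma gram_aux {d : ℕ} (v v' w : V d) (hw : w ≠ 0) :
    (|⟪w, v⟫_ℝ| / (‖w‖ * ‖v‖) - |⟪w, v'⟫_ℝ| / (‖w‖ * ‖v'‖))
      = |⟪‖w‖⁻¹ • w, v⟫_ℝ| / ‖v‖ - |⟪‖w‖⁻¹ • w, v'⟫_ℝ| / ‖v'‖ := by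
  have hw0 : 0 < ‖w‖ := norm_pos_iff.2 hw
  rw [real_inner_smul_left, real_inner_smul_left, abs_mul, abs_mul,
    abs_inv, abs_norm]
  rw [mul_comm ‖w‖ ‖v‖, mul_comm ‖w‖ ‖v'‖, ← div_div, ← div_div]
  congr 1 <;> rw [inv_mul_eq_div] <;> ring

lemma gram_key {d : ℕ} (e v v' : V d) (he : ⟪e, e⟫_ℝ = 1) :
    (|⟪e, v⟫_ℝ| * ‖v'‖ - |⟪e, v'⟫_ℝ| * ‖v‖) ^ 2
      ≤ ‖v‖ ^ 2 * ‖v'‖ ^ 2 - ⟪v, v'⟫_ℝ ^ 2 := by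
  have he2 : ‖e‖ ^ 2 = 1 := by rw [← real_inner_self_eq_norm_sq, he]
  set a := ⟪e, v⟫_ℝ with ha_def
  set b := ⟪e, v'⟫_ℝ with hb_def
  set C := ⟪v, v'⟫_ℝ with hC_def
  have hc1 : ⟪v, e⟫_ℝ = a := (real_inner_comm v e).symm
  have hc2 : ⟪v', e⟫_ℝ = b := (real_inner_comm v' e).symm
  have hCS := real_inner_mul_inner_self_le (v - a • e) (v' - b • e)
  simp only [inner_sub_left, inner_sub_right, real_inner_smul_left,
    real_inner_smul_right, real_inner_self_eq_norm_sq, norm_smul,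
    Real.norm_eq_abs, mul_pow, sq_abs, he, he2, hc1, hc2] at hCS
  have habsC : |C| ≤ ‖v‖ * ‖v'‖ := abs_real_inner_le_norm v v'
  have hCab : C * (a * b) ≤ (‖v‖ * ‖v'‖) * (|a| * |b|) := by
    calc C * (a * b) ≤ |C * (a * b)| := le_abs_self _
      _ = |C| * (|a| * |b|) := by rw [abs_mul, abs_mul]
      _ ≤ (‖v‖ * ‖v'‖) * (|a| * |b|) := by
          apply mul_le_mul_of_nonneg_right habsC (by positivity)
  nlinarith [sq_abs a, sq_abs b, hCS, hCab]

lemma delta_lip_vec {d : ℕ} (v v' w : V d) (hv : v ≠ 0) (hv' : v' ≠ 0)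
    (hw : w ≠ 0) :
    |(|⟪w, v⟫_ℝ| / (‖w‖ * ‖v‖)) - (|⟪w, v'⟫_ℝ| / (‖w‖ * ‖v'‖))|
      ≤ Real.sqrt (‖v‖ ^ 2 * ‖v'‖ ^ 2 - ⟪v, v'⟫_ℝ ^ 2) / (‖v‖ * ‖v'‖) := by
  have hnv : 0 < ‖v‖ := norm_pos_iff.2 hv
  have hnv' : 0 < ‖v'‖ := norm_pos_iff.2 hv'
  have hw0 : 0 < ‖w‖ := norm_pos_iff.2 hw
  set e := ‖w‖⁻¹ • w with he_def
  have he : ⟪e, e⟫_ℝ = 1 := by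
    rw [he_def, real_inner_smul_left, real_inner_smul_right,
      real_inner_self_eq_norm_sq]
    field_simp
  have hkey := gram_key e v v' he
  rw [gram_aux v v' w hw]
  rw [div_sub_div _ _ hnv.ne' hnv'.ne', abs_div,
    abs_of_pos (mul_pos hnv hnv')]
  gcongr
  calc |(|⟪e, v⟫_ℝ| * ‖v'‖ - ‖v‖ * |⟪e, v'⟫_ℝ|)|
      = Real.sqrt ((|⟪e, v⟫_ℝ| * ‖v'‖ - |⟪e, v'⟫_ℝ| * ‖v‖) ^ 2) := by
        rw [Real.sqrt_sq_eq_abs, mul_comm ‖v‖ |⟪e, v'⟫_ℝ|]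
    _ ≤ Real.sqrt (‖v‖ ^ 2 * ‖v'‖ ^ 2 - ⟪v, v'⟫_ℝ ^ 2) := Real.sqrt_le_sqrt hkey

lemma delta_lip (d : ℕ) (y x x' : PV d) :
    |delta d x y - delta d x' y| ≤ angDist d x x' :=
  delta_lip_vec x.rep x'.rep y.rep x.rep_nonzero x'.rep_nonzero y.rep_nonzero
lemma angDist_pos {d : ℕ} {x x' : PV d} (hne : x ≠ x') :
    0 < angDist d x x' := by
  set v := x.rep with hv_def
  set v' := x'.rep with hv'_def
  have hv : v ≠ 0 := x.rep_nonzero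
  have hv' : v' ≠ 0 := x'.rep_nonzero
  have hnv : 0 < ‖v‖ := norm_pos_iff.2 hv
  have hnv' : 0 < ‖v'‖ := norm_pos_iff.2 hv'
  have hC : ⟪v, v'⟫_ℝ ^ 2 ≤ ‖v‖ ^ 2 * ‖v'‖ ^ 2 := by
    have := real_inner_mul_inner_self_le v v'
    rw [real_inner_self_eq_norm_sq, real_inner_self_eq_norm_sq] at this
    nlinarith
  rcases lt_or_eq_of_le hC with hlt | heq
  · exact div_pos (Real.sqrt_pos.2 (by linarith)) (mul_pos hnv hnv')
  · exfalso
    apply hne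
    have habs : |⟪v, v'⟫_ℝ| = ‖v‖ * ‖v'‖ := by
      have h1 : |⟪v, v'⟫_ℝ| = Real.sqrt (⟪v, v'⟫_ℝ ^ 2) :=
        (Real.sqrt_sq_eq_abs _).symm
      rw [h1, heq]
      rw [show ‖v‖ ^ 2 * ‖v'‖ ^ 2 = (‖v‖ * ‖v'‖) ^ 2 by ring,
        Real.sqrt_sq (by positivity)]
    have hsmul : ∃ t : ℝ, t • v' = v := by
      rcases abs_eq (by positivity : (0:ℝ) ≤ ‖v‖ * ‖v'‖) |>.1 habs with h | h
      · have := inner_eq_norm_mul_iff_real.1 h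
        exact ⟨‖v'‖⁻¹ * ‖v‖, by
          rw [mul_smul, ← this, smul_smul, inv_mul_cancel₀ hnv'.ne', one_smul]⟩
      · have h' : ⟪v, -v'⟫_ℝ = ‖v‖ * ‖-v'‖ := by
          rw [inner_neg_right, norm_neg, h]; ring
        have := inner_eq_norm_mul_iff_real.1 h'
        rw [norm_neg] at this
        refine ⟨-(‖v'‖⁻¹ * ‖v‖), ?_⟩
        have h2 : ‖v'‖ • v = -(‖v‖ • v') := by
          rw [← smul_neg, this]
        have h3 : v = ‖v'‖⁻¹ • (‖v'‖ • v) := by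
          rw [smul_smul, inv_mul_cancel₀ hnv'.ne', one_smul]
        conv_rhs => rw [h3, h2]
        rw [smul_neg, smul_smul, ← neg_smul]
    obtain ⟨t, ht⟩ := hsmul
    rw [← x.mk_rep, ← x'.mk_rep, Projectivization.mk_eq_mk_iff']
    exact ⟨t, ht⟩

lemma min_one_le_rpow {t γ : ℝ} (ht : 0 ≤ t) (hγ0 : 0 < γ) (hγ1 : γ ≤ 1) :
    min 1 t ≤ t ^ γ := by
  rcases le_total t 1 with h | h
  · rw [min_eq_right h]
    rcases eq_or_lt_of_le ht with h0 | h0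
    · rw [← h0, Real.zero_rpow hγ0.ne']
    · calc t = t ^ (1:ℝ) := (Real.rpow_one t).symm
        _ ≤ t ^ γ := Real.rpow_le_rpow_of_exponent_ge h0 h hγ1
  · rw [min_eq_left h]
    exact Real.one_le_rpow h hγ0.le

lemma holderRatio_nonneg (d : ℕ) (γ : ℝ) (φ : PV d → ℝ) (p : PV d × PV d) :
    0 ≤ holderRatio d γ φ p := by
  unfold holderRatio
  split_ifs with h
  · exact le_refl 0
  · exact div_nonneg (abs_nonneg _) (Real.rpow_nonneg (angDist_nonneg _ _ _) γ)

/-- Hölder norm of `φ·χ_{n,k}^y` (inequality (3.25) of Xiao–Grama–Liu): there is an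
absolute constant `c > 0` such that for `γ ∈ (0,1]`, `n ≥ 18`, `k ≥ 0`, `y ∈ ℙ(V*)`
and `φ ∈ B_γ`, the product `φ·χ_{n,k}^y` is in `B_γ` and
`‖φ·χ_{n,k}^y‖_γ ≤ c ‖φ‖_∞ e^{γ k a_n} / a_n^γ + ‖φ‖_γ`. -/
theorem holder_norm_phi_chi :
    ∃ c > (0 : ℝ), ∀ (γ : ℝ), 0 < γ → γ ≤ 1 → ∀ (n : ℕ), 18 ≤ n → ∀ (k : ℕ),
      ∀ (d : ℕ), 1 ≤ d → ∀ (y : PV d) (φ : PV d → ℝ), MemBgamma d γ φ →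
        MemBgamma d γ (fun x => φ x * chi d n k y x) ∧
          holderNorm d γ (fun x => φ x * chi d n k y x)
            ≤ c * supNorm d φ * Real.exp (γ * k * an n) / an n ^ γ
              + holderNorm d γ φ := by
  refine ⟨6, by norm_num, ?_⟩
  intro γ hγ0 hγ1 n hn k d hd y φ hφ
  have hn0 : (0:ℝ) < n := by
    have : 0 < n := by omega
    exact_mod_cast this
  have hn18 : (18:ℝ) ≤ n := by exact_mod_cast hn
  have hlog : 1 ≤ Real.log n := by
    rw [Real.le_log_iff_exp_le hn0]
    calc Real.exp 1 ≤ 2.7182818286 := Real.exp_one_lt_d9.le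
      _ ≤ 18 := by norm_num
      _ ≤ n := hn18
  have ha0 : 0 < an n := div_pos one_pos (by linarith)
  have ha1 : an n ≤ 1 := by
    rw [an, div_le_one (by linarith)]; exact hlog
  haveI : Nonempty (Fin d) := ⟨⟨0, hd⟩⟩
  haveI : Nontrivial (V d) := inferInstance
  haveI : Nonempty (PV d) := inferInstance
  set a := an n with ha_def
  set m := Real.exp (-(((k:ℝ) + 1) * a)) with hm_def
  have hm0 : 0 < m := Real.exp_pos _
  set L := 2 / (a * m) with hL_def
  have hL0 : 0 < L := by positivity
  have hsupnn : 0 ≤ supNorm d φ := Real.iSup_nonneg fun x => abs_nonneg _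
  have hseminn : 0 ≤ holderSemi d γ φ :=
    Real.iSup_nonneg fun p => holderRatio_nonneg d γ φ p
  have hEpos : 0 < Real.exp (γ * k * a) := Real.exp_pos _
  have haγ : 0 < a ^ γ := Real.rpow_pos_of_pos ha0 γ
  -- bound on L ^ γ
  have hLγ : L ^ γ ≤ 6 * Real.exp (γ * k * a) / a ^ γ := by
    have hL_eq : L = 2 * Real.exp (((k:ℝ) + 1) * a) / a := by
      rw [hL_def, hm_def, Real.exp_neg]
      field_simp
    rw [hL_eq, Real.div_rpow (by positivity) ha0.le,
      Real.mul_rpow (by norm_num) (Real.exp_pos _).le, ← Real.exp_mul]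
    have hnum : (2:ℝ) ^ γ * Real.exp ((((k:ℝ) + 1) * a) * γ)
        ≤ 6 * Real.exp (γ * k * a) := by
      have h2γ : (2:ℝ) ^ γ ≤ 2 := by
        calc (2:ℝ) ^ γ ≤ (2:ℝ) ^ (1:ℝ) :=
              Real.rpow_le_rpow_of_exponent_le one_le_two hγ1
          _ = 2 := Real.rpow_one 2
      have hexp : Real.exp ((((k:ℝ) + 1) * a) * γ) ≤ Real.exp (γ * k * a) * 3 := by
        have harg : (((k:ℝ) + 1) * a) * γ = γ * k * a + a * γ := by ring
        rw [harg, Real.exp_add]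
        have h1 : a * γ ≤ 1 := by nlinarith
        have h2 : Real.exp (a * γ) ≤ 3 := by
          calc Real.exp (a * γ) ≤ Real.exp 1 := Real.exp_le_exp.2 h1
            _ ≤ 2.7182818286 := Real.exp_one_lt_d9.le
            _ ≤ 3 := by norm_num
        exact mul_le_mul_of_nonneg_left h2 (Real.exp_pos _).le
      calc (2:ℝ) ^ γ * Real.exp ((((k:ℝ) + 1) * a) * γ)
          ≤ 2 * (Real.exp (γ * k * a) * 3) :=
            mul_le_mul h2γ hexp (Real.exp_pos _).le (by norm_num)
        _ = 6 * Real.exp (γ * k * a) := by ring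
    gcongr
  -- chi bounds
  have hchi0 : ∀ x, 0 ≤ chi d n k y x := by
    intro x; unfold chi; split_ifs
    · exact le_refl 0
    · exact hnk_nonneg n k ha0 _
  have hchi1 : ∀ x, chi d n k y x ≤ 1 := by
    intro x; unfold chi; split_ifs
    · exact zero_le_one
    · exact hnk_le_one n k _
  have hsup : ∀ x, |φ x| ≤ supNorm d φ := fun x => le_ciSup hφ.1 x
  have hsemi : ∀ p, holderRatio d γ φ p ≤ holderSemi d γ φ :=
    fun p => le_ciSup hφ.2 p
  have hsupb : ∀ x, |φ x * chi d n k y x| ≤ supNorm d φ := by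
    intro x
    rw [abs_mul]
    calc |φ x| * |chi d n k y x| ≤ |φ x| * 1 := by
          apply mul_le_mul_of_nonneg_left ?_ (abs_nonneg _)
          rw [abs_of_nonneg (hchi0 x)]; exact hchi1 x
      _ = |φ x| := mul_one _
      _ ≤ supNorm d φ := hsup x
  set B := 6 * supNorm d φ * Real.exp (γ * k * a) / a ^ γ + holderSemi d γ φ
    with hB_def
  have hBnn : 0 ≤ B := by
    apply add_nonneg _ hseminn
    apply div_nonneg _ haγ.le
    positivity
  have hratio : ∀ p, holderRatio d γ (fun x => φ x * chi d n k y x) p ≤ B := by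
    intro p
    unfold holderRatio
    split_ifs with hp
    · exact hBnn
    · have hD : 0 < angDist d p.1 p.2 := angDist_pos hp
      have hDγ : 0 < angDist d p.1 p.2 ^ γ := Real.rpow_pos_of_pos hD γ
      rw [div_le_iff₀ hDγ]
      have hphi : |φ p.1 - φ p.2| ≤ holderSemi d γ φ * angDist d p.1 p.2 ^ γ := by
        have h := hsemi p
        unfold holderRatio at h
        rw [if_neg hp] at h
        calc |φ p.1 - φ p.2|
            = |φ p.1 - φ p.2| / angDist d p.1 p.2 ^ γ * angDist d p.1 p.2 ^ γ := by
              field_simp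
          _ ≤ holderSemi d γ φ * angDist d p.1 p.2 ^ γ :=
              mul_le_mul_of_nonneg_right h hDγ.le
      have hchid : |chi d n k y p.1 - chi d n k y p.2|
          ≤ 6 * Real.exp (γ * k * a) / a ^ γ * angDist d p.1 p.2 ^ γ := by
        have e1 : |chi d n k y p.1 - chi d n k y p.2| ≤ L * angDist d p.1 p.2 := by
          calc |chi d n k y p.1 - chi d n k y p.2|
              ≤ L * |delta d p.1 y - delta d p.2 y| := chi_lip d n k ha0 y p.1 p.2
            _ ≤ L * angDist d p.1 p.2 :=
                mul_le_mul_of_nonneg_left (delta_lip d y p.1 p.2) hL0.le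
        have e2 : |chi d n k y p.1 - chi d n k y p.2| ≤ 1 := by
          rw [abs_le]
          constructor
          · linarith [hchi0 p.1, hchi1 p.2]
          · linarith [hchi1 p.1, hchi0 p.2]
        calc |chi d n k y p.1 - chi d n k y p.2|
            ≤ min 1 (L * angDist d p.1 p.2) := le_min e2 e1
          _ ≤ (L * angDist d p.1 p.2) ^ γ :=
              min_one_le_rpow (by positivity) hγ0 hγ1
          _ = L ^ γ * angDist d p.1 p.2 ^ γ :=
              Real.mul_rpow hL0.le (angDist_nonneg d p.1 p.2)
          _ ≤ 6 * Real.exp (γ * k * a) / a ^ γ * angDist d p.1 p.2 ^ γ :=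
              mul_le_mul_of_nonneg_right hLγ hDγ.le
      calc |φ p.1 * chi d n k y p.1 - φ p.2 * chi d n k y p.2|
          = |(φ p.1 - φ p.2) * chi d n k y p.2
              + φ p.1 * (chi d n k y p.1 - chi d n k y p.2)| := by ring_nf
        _ ≤ |(φ p.1 - φ p.2) * chi d n k y p.2|
              + |φ p.1 * (chi d n k y p.1 - chi d n k y p.2)| := abs_add_le _ _
        _ = |φ p.1 - φ p.2| * |chi d n k y p.2|
              + |φ p.1| * |chi d n k y p.1 - chi d n k y p.2| := by
            rw [abs_mul, abs_mul]
        _ ≤ (holderSemi d γ φ * angDist d p.1 p.2 ^ γ) * 1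
              + supNorm d φ
                * (6 * Real.exp (γ * k * a) / a ^ γ * angDist d p.1 p.2 ^ γ) := by
            apply add_le_add
            · apply mul_le_mul hphi ?_ (abs_nonneg _) (by positivity)
              rw [abs_of_nonneg (hchi0 p.2)]; exact hchi1 p.2
            · exact mul_le_mul (hsup p.1) hchid (abs_nonneg _) hsupnn
        _ = B * angDist d p.1 p.2 ^ γ := by rw [hB_def]; ring
  have h_semi_le : holderSemi d γ (fun x => φ x * chi d n k y x) ≤ B :=
    ciSup_le hratio
  have h_sup_le : supNorm d (fun x => φ x * chi d n k y x) ≤ supNorm d φ :=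
    ciSup_le hsupb
  refine ⟨⟨⟨supNorm d φ, ?_⟩, ⟨B, ?_⟩⟩, ?_⟩
  · rintro r ⟨x, rfl⟩; exact hsupb x
  · rintro r ⟨p, rfl⟩; exact hratio p
  · unfold holderNorm
    calc (supNorm d fun x => φ x * chi d n k y x)
          + (holderSemi d γ fun x => φ x * chi d n k y x)
        ≤ supNorm d φ + B := add_le_add h_sup_le h_semi_le
      _ = 6 * supNorm d φ * Real.exp (γ * k * a) / a ^ γ
          + (supNorm d φ + holderSemi d γ φ) := by rw [hB_def]; ring
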